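/- arXiv:math/0102154 — 2 statements merged into one kernel-verified Lean document; each statement's English description precedes it below -/
import Mathlib

section
/- For a matrix A in SL(2,C) acting on the upper half-space model of hyperbolic 3-space, the hyperbolic distance from the point j = (0,0,1) to its image A·j satisfies ‖A‖² = 2·cosh(d(j, A·j)), where ‖A‖ is the Frobenius norm (square root of the sum of squares of absolute values of entries). -/
noncomputable section

abbrev SL2C := Matrix.SpecialLinearGroup (Fin 2) ℂ

/-- The embedding of ℂ into the quaternions (span of 1, i). -/
def cq (z : ℂ) : Quaternion ℝ := ⟨z.re, z.im, 0, 0⟩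

/-- The quaternion j, i.e. the point (0,0,1) of upper half-space. -/
def jq : Quaternion ℝ := ⟨0, 0, 1, 0⟩

/-- The Möbius action of SL(2,ℂ) on upper half-space: q ↦ (aq+b)(cq+d)⁻¹. -/
def moebAct (A : SL2C) (q : Quaternion ℝ) : Quaternion ℝ :=
  (cq (A.1 0 0) * q + cq (A.1 0 1)) * (cq (A.1 1 0) * q + cq (A.1 1 1))⁻¹

/-- The square of the Frobenius norm of A ∈ SL(2,ℂ). -/
def frobSq (A : SL2C) : ℝ :=
  ‖A.1 0 0‖ ^ 2 + ‖A.1 0 1‖ ^ 2 + ‖A.1 1 0‖ ^ 2 + ‖A.1 1 1‖ ^ 2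

/-- Inverse hyperbolic cosine (not yet in Mathlib). -/
def arccosh (x : ℝ) : ℝ := Real.log (x + Real.sqrt (x ^ 2 - 1))

/-- The hyperbolic distance in the upper half-space model
(points are quaternions a + bi + cj with c > 0, k-part 0). -/
def hypDist (p q : Quaternion ℝ) : ℝ :=
  arccosh (1 + ‖p - q‖ ^ 2 / (2 * p.imJ * q.imJ))

/-!
Write `A = [[a, b], [c, d]]`, `w = a c̄ + b d̄` and `s = |c|² + |d|²`. Since `j z = z̄ j` for
complex `z`, `(w + j)(c j + d) = (w c + d̄) j + (w d - c̄)`, and `ad - bc = 1` turns the right side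
into `s (a j + b)`; hence `A·j = (w + j) / s`. For a point `q` of height `t`,
`2 cosh d(j, q) = (‖q‖² + 1) / t`, and Lagrange's identity
`|w|² + |ad - bc|² = (|a|² + |b|²) s` gives `2 cosh d(j, A·j) = |a|² + |b|² + s`.
-/

open ComplexConjugate

@[simp] lemma re_jq : jq.re = 0 := rfl
@[simp] lemma imI_jq : jq.imI = 0 := rfl
@[simp] lemma imJ_jq : jq.imJ = 1 := rfl
@[simp] lemma imK_jq : jq.imK = 0 := rfl
@[simp] lemma re_cq (z : ℂ) : (cq z).re = z.re := rfl
@[simp] lemma imI_cq (z : ℂ) : (cq z).imI = z.im := rfl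
@[simp] lemma imJ_cq (z : ℂ) : (cq z).imJ = 0 := rfl
@[simp] lemma imK_cq (z : ℂ) : (cq z).imK = 0 := rfl

lemma Quaternion.sq_norm_eq (q : Quaternion ℝ) :
    ‖q‖ ^ 2 = q.re ^ 2 + q.imI ^ 2 + q.imJ ^ 2 + q.imK ^ 2 := by
  rw [sq, ← Quaternion.normSq_eq_norm_mul_self, Quaternion.normSq_def']

lemma sq_norm_cq_add_jq (z : ℂ) : ‖cq z + jq‖ ^ 2 = Complex.normSq z + 1 := by
  rw [Quaternion.sq_norm_eq, Complex.normSq_apply]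
  simp [sq]

lemma sq_norm_cq_mul_jq_add_cq (z w : ℂ) :
    ‖cq z * jq + cq w‖ ^ 2 = Complex.normSq z + Complex.normSq w := by
  rw [Quaternion.sq_norm_eq, Complex.normSq_apply, Complex.normSq_apply]
  simp [sq]
  ring

lemma cq_ofReal_mul (r : ℝ) (z : ℂ) : cq (r * z) = r • cq z := by
  ext <;> simp

lemma cq_add_jq_mul_cq_mul_jq_add_cq (w c d : ℂ) :
    (cq w + jq) * (cq c * jq + cq d) = cq (w * c + conj d) * jq + cq (w * d - conj c) := by
  ext <;> simp [sub_eq_add_neg]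

lemma cosh_arccosh {x : ℝ} (hx : 1 ≤ x) : Real.cosh (arccosh x) = x := by
  have hroot : Real.sqrt (x ^ 2 - 1) ^ 2 = x ^ 2 - 1 := Real.sq_sqrt (by nlinarith)
  have hpos : 0 < x + Real.sqrt (x ^ 2 - 1) := by positivity
  rw [arccosh, Real.cosh_eq, Real.exp_neg, Real.exp_log hpos]
  field_simp
  linear_combination hroot

lemma two_mul_cosh_hypDist_jq {q : Quaternion ℝ} (hq : 0 < q.imJ) :
    2 * Real.cosh (hypDist jq q) = (‖q‖ ^ 2 + 1) / q.imJ := by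
  have hdist : ‖jq - q‖ ^ 2 = ‖q‖ ^ 2 - 2 * q.imJ + 1 := by
    simp only [Quaternion.sq_norm_eq, Quaternion.re_sub, Quaternion.imI_sub, Quaternion.imJ_sub,
      Quaternion.imK_sub, re_jq, imI_jq, imJ_jq, imK_jq]
    ring
  have harg : 1 ≤ 1 + ‖jq - q‖ ^ 2 / (2 * jq.imJ * q.imJ) := by
    have : 0 ≤ ‖jq - q‖ ^ 2 / (2 * jq.imJ * q.imJ) := by rw [imJ_jq]; positivity
    linarith
  rw [hypDist, cosh_arccosh harg, hdist, imJ_jq]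
  field_simp
  ring

lemma Complex.normSq_mul_conj_add_mul_conj_add_normSq_mul_sub_mul (a b c d : ℂ) :
    normSq (a * conj c + b * conj d) + normSq (a * d - b * c) =
      (normSq a + normSq b) * (normSq c + normSq d) := by
  simp only [normSq_apply, add_re, add_im, sub_re, sub_im, mul_re, mul_im, conj_re, conj_im]
  ring

lemma Matrix.SpecialLinearGroup.det_fin_two_eq_one {R : Type*} [CommRing R]
    (A : Matrix.SpecialLinearGroup (Fin 2) R) : A 0 0 * A 1 1 - A 0 1 * A 1 0 = 1 := by
  rw [← Matrix.det_fin_two]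
  exact A.det_coe

lemma normSq_bottom_row_pos (A : SL2C) :
    0 < Complex.normSq (A 1 0) + Complex.normSq (A 1 1) := by
  by_contra! h
  have hc : A 1 0 = 0 := Complex.normSq_eq_zero.mp
    (by linarith [Complex.normSq_nonneg (A 1 0), Complex.normSq_nonneg (A 1 1)])
  have hd : A 1 1 = 0 := Complex.normSq_eq_zero.mp
    (by linarith [Complex.normSq_nonneg (A 1 0), Complex.normSq_nonneg (A 1 1)])
  simpa [hc, hd] using A.det_fin_two_eq_one

lemma moebAct_jq (A : SL2C) :
    moebAct A jq = (Complex.normSq (A 1 0) + Complex.normSq (A 1 1))⁻¹ •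
      (cq (A 0 0 * conj (A 1 0) + A 0 1 * conj (A 1 1)) + jq) := by
  have hs := normSq_bottom_row_pos A
  have hdet := A.det_fin_two_eq_one
  set a := A 0 0
  set b := A 0 1
  set c := A 1 0
  set d := A 1 1
  set w := a * conj c + b * conj d
  set s := Complex.normSq c + Complex.normSq d
  have ha : w * c + conj d = s * a := by
    simp only [w, s, Complex.ofReal_add, ← Complex.mul_conj]
    linear_combination (-conj d) * hdet
  have hb : w * d - conj c = s * b := by
    simp only [w, s, Complex.ofReal_add, ← Complex.mul_conj]
    linear_combination (conj c) * hdet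
  have hN : cq c * jq + cq d ≠ 0 := by
    rw [← norm_ne_zero_iff, ← pow_ne_zero_iff two_ne_zero, sq_norm_cq_mul_jq_add_cq]
    exact hs.ne'
  rw [moebAct, eq_comm, eq_mul_inv_iff_mul_eq₀ hN]
  calc s⁻¹ • (cq w + jq) * (cq c * jq + cq d)
      = s⁻¹ • (cq (w * c + conj d) * jq + cq (w * d - conj c)) := by
        rw [smul_mul_assoc, cq_add_jq_mul_cq_mul_jq_add_cq]
    _ = s⁻¹ • s • (cq a * jq + cq b) := by
        rw [ha, hb, cq_ofReal_mul, cq_ofReal_mul, smul_mul_assoc, ← smul_add]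
    _ = cq a * jq + cq b := inv_smul_smul₀ hs.ne' _

/-- ‖A‖² = 2 cosh d(j, A·j) for every A ∈ SL(2,ℂ). -/
theorem frobSq_eq_two_cosh_dist (A : SL2C) :
    frobSq A = 2 * Real.cosh (hypDist jq (moebAct A jq)) := by
  have hs := normSq_bottom_row_pos A
  have hlagrange := Complex.normSq_mul_conj_add_mul_conj_add_normSq_mul_sub_mul
    (A 0 0) (A 0 1) (A 1 0) (A 1 1)
  rw [A.det_fin_two_eq_one, map_one] at hlagrange
  rw [moebAct_jq, two_mul_cosh_hypDist_jq (by simpa using hs), norm_smul, mul_pow,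
    sq_norm_cq_add_jq, frobSq]
  simp only [Complex.sq_norm, Real.norm_eq_abs, sq_abs, Quaternion.imJ_smul, Quaternion.imJ_add,
    imJ_cq, imJ_jq, zero_add, smul_eq_mul, mul_one]
  field_simp
  linear_combination -hlagrange
end
end

section
/- If ‖A‖² < 2 + 2⁻⁵⁸ for A ∈ SL(2,C), then the hyperbolic distance moved by the point j under the action of A satisfies d(j, A·j) = arccosh(‖A‖²/2) < 0.49/(16·(2·(4π/0.49)³ + 1)). -/
noncomputable section

/-!
Write `u = b + a j` and `v = d + c j`, so that `A • j = u v⁻¹`. Multiplicativity of the quaternion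
norm gives `|A • j|² = (|a|² + |b|²) / (|c|² + |d|²)`, and the `j`-coordinate of `u v̄` is
`Re (a d - b c) = 1`, so `A • j` has height `1 / (|c|² + |d|²)`. For any point `q` of height `t`,
`1 + |j - q|² / (2t) = (|q|² + 1) / (2t)`; at `q = A • j` this is `‖A‖² / 2`.
The numerical bound follows from `log y ≤ y - 1`, which gives `arccosh x ≤ x - 1 + √(x² - 1)`,
together with `π < 3.15`.
-/

open Quaternion

section components

variable (a b : ℂ)

@[simp] lemma re_cq_mul_jq_add_cq : (cq a * jq + cq b).re = b.re := by
  simp only [Quaternion.re_add, Quaternion.re_mul]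
  simp [cq, jq]

@[simp] lemma imI_cq_mul_jq_add_cq : (cq a * jq + cq b).imI = b.im := by
  simp only [Quaternion.imI_add, Quaternion.imI_mul]
  simp [cq, jq]

@[simp] lemma imJ_cq_mul_jq_add_cq : (cq a * jq + cq b).imJ = a.re := by
  simp only [Quaternion.imJ_add, Quaternion.imJ_mul]
  simp [cq, jq]

@[simp] lemma imK_cq_mul_jq_add_cq : (cq a * jq + cq b).imK = a.im := by
  simp only [Quaternion.imK_add, Quaternion.imK_mul]
  simp [cq, jq]

end components

lemma normSq_cq_mul_jq_add_cq (a b : ℂ) : normSq (cq a * jq + cq b) = ‖a‖ ^ 2 + ‖b‖ ^ 2 := by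
  simp only [normSq_def', re_cq_mul_jq_add_cq, imI_cq_mul_jq_add_cq, imJ_cq_mul_jq_add_cq,
    imK_cq_mul_jq_add_cq, Complex.sq_norm, Complex.normSq_apply]
  ring

lemma imJ_cq_mul_jq_add_cq_mul_star (a b c d : ℂ) :
    ((cq a * jq + cq b) * star (cq c * jq + cq d)).imJ = (a * d - b * c).re := by
  simp only [imJ_mul, Quaternion.re_star, Quaternion.imI_star, Quaternion.imJ_star,
    Quaternion.imK_star, re_cq_mul_jq_add_cq, imI_cq_mul_jq_add_cq, imJ_cq_mul_jq_add_cq,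
    imK_cq_mul_jq_add_cq, Complex.sub_re, Complex.mul_re]
  ring

lemma hypDist_jq_eq (q : Quaternion ℝ) (hq : q.imJ ≠ 0) :
    hypDist jq q = arccosh ((normSq q + 1) / (2 * q.imJ)) := by
  have hj : jq.imJ = 1 := rfl
  have hnorm : ‖jq - q‖ ^ 2 = normSq q - 2 * q.imJ + 1 := by
    rw [sq, ← normSq_eq_norm_mul_self, normSq_def', normSq_def']
    simp only [Quaternion.re_sub, Quaternion.imI_sub, Quaternion.imJ_sub, Quaternion.imK_sub]
    simp only [jq]
    ring
  rw [hypDist, hnorm, hj]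
  congr 1
  field_simp
  ring

section moebius

variable (A : SL2C)

lemma det_fin_two_eq_one : A.1 0 0 * A.1 1 1 - A.1 0 1 * A.1 1 0 = 1 :=
  Matrix.det_fin_two A.1 ▸ A.2

lemma normSq_lower_row_pos : 0 < ‖A.1 1 0‖ ^ 2 + ‖A.1 1 1‖ ^ 2 := by
  by_contra! h
  have hc : A.1 1 0 = 0 := by
    simpa using (show ‖A.1 1 0‖ ^ 2 = 0 by nlinarith [sq_nonneg ‖A.1 1 0‖, sq_nonneg ‖A.1 1 1‖])
  have hd : A.1 1 1 = 0 := by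
    simpa using (show ‖A.1 1 1‖ ^ 2 = 0 by nlinarith [sq_nonneg ‖A.1 1 0‖, sq_nonneg ‖A.1 1 1‖])
  simpa [hc, hd] using det_fin_two_eq_one A

lemma frobSq_pos : 0 < frobSq A := by
  have := normSq_lower_row_pos A
  rw [frobSq]
  linarith [sq_nonneg ‖A.1 0 0‖, sq_nonneg ‖A.1 0 1‖]

lemma imJ_moebAct_jq : (moebAct A jq).imJ = 1 / (‖A.1 1 0‖ ^ 2 + ‖A.1 1 1‖ ^ 2) := by
  rw [moebAct, inv_def, mul_smul_comm, imJ_smul, imJ_cq_mul_jq_add_cq_mul_star,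
    normSq_cq_mul_jq_add_cq, det_fin_two_eq_one, smul_eq_mul, Complex.one_re, mul_one, one_div]

lemma normSq_moebAct_jq : normSq (moebAct A jq) =
    (‖A.1 0 0‖ ^ 2 + ‖A.1 0 1‖ ^ 2) / (‖A.1 1 0‖ ^ 2 + ‖A.1 1 1‖ ^ 2) := by
  rw [moebAct, map_mul, map_inv₀, normSq_cq_mul_jq_add_cq, normSq_cq_mul_jq_add_cq, div_eq_mul_inv]

lemma hypDist_jq_moebAct_jq : hypDist jq (moebAct A jq) = arccosh (frobSq A / 2) := by
  have hN := normSq_lower_row_pos A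
  rw [hypDist_jq_eq _ (by rw [imJ_moebAct_jq]; positivity), normSq_moebAct_jq, imJ_moebAct_jq,
    frobSq]
  congr 1
  field_simp
  ring

end moebius

lemma arccosh_le_sub_one_add_sqrt {x : ℝ} (hx : 0 < x) : arccosh x ≤ x - 1 + √(x ^ 2 - 1) :=
  calc arccosh x ≤ x + √(x ^ 2 - 1) - 1 := Real.log_le_sub_one_of_pos (by positivity)
    _ = x - 1 + √(x ^ 2 - 1) := by ring

lemma arccosh_lt_add_sqrt {x δ : ℝ} (hx : 0 < x) (hxδ : x < 1 + δ) (hδ₀ : 0 ≤ δ) (hδ₁ : δ ≤ 1) :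
    arccosh x < δ + √(3 * δ) := by
  have hsq : x ^ 2 - 1 ≤ 3 * δ := by nlinarith
  calc arccosh x ≤ x - 1 + √(x ^ 2 - 1) := arccosh_le_sub_one_add_sqrt hx
    _ < δ + √(3 * δ) := add_lt_add_of_lt_of_le (by linarith) (Real.sqrt_le_sqrt hsq)

open Real in
lemma margulis_constant_gt : (1 / 10 ^ 7 : ℝ) < 0.49 / (16 * (2 * (4 * π / 0.49) ^ 3 + 1)) := by
  have hcube : (4 * π / 0.49) ^ 3 < (4 * 3.15 / 0.49 : ℝ) ^ 3 := by
    gcongr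
    exact pi_lt_d2
  rw [lt_div_iff₀ (by positivity)]
  norm_num at hcube ⊢
  linarith

open Real in
/-- If ‖A‖² < 2 + 2⁻⁵⁸ then d(j, A·j) = arccosh(‖A‖²/2) is smaller than the
Margulis constant 0.49/(16·(2·(4π/0.49)³ + 1)). -/
theorem dist_lt_margulis_of_frobSq_small (A : SL2C)
    (h : frobSq A < 2 + 2 ^ (-58 : ℤ)) :
    hypDist jq (moebAct A jq) = arccosh (frobSq A / 2) ∧
    hypDist jq (moebAct A jq) <
      0.49 / (16 * (2 * (4 * π / 0.49) ^ 3 + 1)) := by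
  refine ⟨hypDist_jq_moebAct_jq A, ?_⟩
  have hx : frobSq A / 2 < 1 + 2 ^ (-59 : ℤ) := by
    norm_num at h ⊢
    linarith
  have hsqrt : √(3 * (2 : ℝ) ^ (-59 : ℤ)) < 1 / 10 ^ 8 :=
    (sqrt_lt' (by norm_num)).2 (by norm_num)
  calc hypDist jq (moebAct A jq) = arccosh (frobSq A / 2) := hypDist_jq_moebAct_jq A
    _ < 2 ^ (-59 : ℤ) + √(3 * (2 : ℝ) ^ (-59 : ℤ)) :=
      arccosh_lt_add_sqrt (half_pos (frobSq_pos A)) hx (by positivity) (by norm_num)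
    _ < 1 / 10 ^ 7 := by norm_num at hsqrt ⊢; linarith
    _ < 0.49 / (16 * (2 * (4 * π / 0.49) ^ 3 + 1)) := margulis_constant_gt
end
end
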